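/- Let L ≥ 2 be an integer, A ∈ ℝ^{M×N}, and b ∈ ℝ^M not identically zero, with S₊ = {z ≥ 0 : Az = b} nonempty. Suppose (r,u) follows the weight-normalized gradient flow with time-dependent learning rates (η_r, η_u) = (r(t)², 1), with r(0) > 0, u(0) > 0 entrywise, and ‖u(0)‖₂ = 1, and set x(t) = (r(t)/‖u(t)‖₂) u(t). Then lim_{t→∞} 𝓛(x(t)) = 0. -/

import Mathlib

open Filter Topology

noncomputable section

variable {M N : ℕ}

/-- Entrywise (Hadamard) natural power `x^{⊙L}`. -/
def hadPow (x : Fin N → ℝ) (L : ℕ) : Fin N → ℝ := fun n => x n ^ L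

/-- Euclidean (ℓ2) norm of a vector. -/
def eucNorm (u : Fin N → ℝ) : ℝ := Real.sqrt (∑ n, u n ^ 2)

/-- The loss `𝓛(x) = (1/(2L)) ‖A x^{⊙L} − b‖₂²`. -/
def loss (A : Matrix (Fin M) (Fin N) ℝ) (b : Fin M → ℝ) (L : ℕ) (x : Fin N → ℝ) : ℝ :=
  (1 / (2 * (L : ℝ))) * ∑ m, (A.mulVec (hadPow x L) m - b m) ^ 2

/-- The gradient `∇𝓛(x) = [Aᵀ(A x^{⊙L} − b)] ⊙ x^{⊙(L−1)}`. -/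
def gradLoss (A : Matrix (Fin M) (Fin N) ℝ) (b : Fin M → ℝ) (L : ℕ) (x : Fin N → ℝ) :
    Fin N → ℝ :=
  fun n => A.transpose.mulVec (A.mulVec (hadPow x L) - b) n * x n ^ (L - 1)

/-- The weight-normalized vector `x = (r/‖u‖₂) u`. -/
def normVec (r : ℝ) (u : Fin N → ℝ) : Fin N → ℝ := (r / eucNorm u) • u

/-- `∇_r 𝓛̃(r,u) = (uᵀ/‖u‖₂) ∇𝓛((r/‖u‖₂)u)`. -/
def gradR (A : Matrix (Fin M) (Fin N) ℝ) (b : Fin M → ℝ) (L : ℕ) (r : ℝ)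
    (u : Fin N → ℝ) : ℝ :=
  ∑ n, (u n / eucNorm u) * gradLoss A b L (normVec r u) n

/-- `∇_u 𝓛̃(r,u) = (r/‖u‖₂)(I − uuᵀ/‖u‖₂²) ∇𝓛((r/‖u‖₂)u)`. -/
def gradU (A : Matrix (Fin M) (Fin N) ℝ) (b : Fin M → ℝ) (L : ℕ) (r : ℝ)
    (u : Fin N → ℝ) : Fin N → ℝ :=
  fun n => (r / eucNorm u) * (gradLoss A b L (normVec r u) n -
    (∑ k, u k * gradLoss A b L (normVec r u) k) / eucNorm u ^ 2 * u n)

/-- Weight-normalized gradient flow with (possibly time-dependent) learning rates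
`(η_r, η_u)`: `∂ₜ r = −η_r ∇_r 𝓛̃(r,u)`, `∂ₜ u = −η_u ∇_u 𝓛̃(r,u)` for `t ≥ 0`. -/
def WNFlow (A : Matrix (Fin M) (Fin N) ℝ) (b : Fin M → ℝ) (L : ℕ)
    (ηr ηu : ℝ → ℝ) (r : ℝ → ℝ) (u : ℝ → Fin N → ℝ) : Prop :=
  (∀ t, 0 ≤ t → HasDerivAt r (-(ηr t * gradR A b L (r t) (u t))) t) ∧
  (∀ t, 0 ≤ t → ∀ n, HasDerivAt (fun s => u s n) (-(ηu t * gradU A b L (r t) (u t) n)) t)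

/-- Plain gradient flow `∂ₜ x = −∇𝓛(x)` for `t ≥ 0`. -/
def GradFlow (A : Matrix (Fin M) (Fin N) ℝ) (b : Fin M → ℝ) (L : ℕ)
    (x : ℝ → Fin N → ℝ) : Prop :=
  ∀ t, 0 ≤ t → ∀ n, HasDerivAt (fun s => x s n) (-gradLoss A b L (x t) n) t

/-- The set of nonnegative solutions `S₊ = {z ≥ 0 : Az = b}`. -/
def Splus (A : Matrix (Fin M) (Fin N) ℝ) (b : Fin M → ℝ) : Set (Fin N → ℝ) :=
  {z | (∀ n, 0 ≤ z n) ∧ A.mulVec z = b}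

/-- Weighted ℓ1-norm `‖z‖_{w,1} = ‖w ⊙ z‖₁`. -/
def wl1 (w z : Fin N → ℝ) : ℝ := ∑ n, |w n * z n|

/-- The Moore–Penrose conditions characterizing the pseudoinverse `A†`. -/
def IsMoorePenrose (A : Matrix (Fin M) (Fin N) ℝ) (Adag : Matrix (Fin N) (Fin M) ℝ) :
    Prop :=
  A * Adag * A = A ∧ Adag * A * Adag = Adag ∧
    (A * Adag).transpose = A * Adag ∧ (Adag * A).transpose = Adag * A

/-- The potential `F` defining the Bregman divergence. -/
def breF (L : ℕ) (p : Fin N → ℝ) : ℝ :=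
  if L = 2 then (1 / 2) * ∑ n, (p n * Real.log (p n) - p n)
  else ((L : ℝ) / (2 * (2 - (L : ℝ)))) * ∑ n, p n ^ ((2 : ℝ) / (L : ℝ))

/-- The gradient of the potential `F`. -/
def breGradF (L : ℕ) (q : Fin N → ℝ) : Fin N → ℝ :=
  fun n => if L = 2 then (1 / 2) * Real.log (q n)
  else (1 / (2 - (L : ℝ))) * q n ^ ((2 : ℝ) / (L : ℝ) - 1)

/-- Bregman divergence `D_F(p,q) = F(p) − F(q) − ⟨∇F(q), p − q⟩`. -/
def bregman (L : ℕ) (p q : Fin N → ℝ) : ℝ :=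
  breF L p - breF L q - ∑ n, breGradF L q n * (p n - q n)


/-! The sphere `‖u‖₂ = 1` is invariant, so `x = r u` is a solution of the gradient flow of `𝓛`
slowed down by the factor `r² ≥ xₙ²`. Fix `z ∈ S₊` and let `Φ` be a primitive of `y ↦ y^{1-L}`.
The function `∑ₙ (xₙ²/2 − zₙ Φ(xₙ))` is bounded below and decreases at rate `2L r² 𝓛(x)`, while
`Φ(xₙ)` decreases at rate at most `C r²`. If `𝓛(x) ≥ ε` for all times, comparing the two rates keeps
`Φ(xₙ)`, hence `xₙ` and `r²`, bounded away from zero, so the first function would decrease linearly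
to `-∞`. -/

open Set

theorem monotoneOn_Ici_of_hasDerivAt {f f' : ℝ → ℝ}
    (hf : ∀ t, 0 ≤ t → HasDerivAt f (f' t) t) (hf' : ∀ t, 0 ≤ t → 0 ≤ f' t) :
    MonotoneOn f (Ici 0) := by
  refine monotoneOn_of_hasDerivWithinAt_nonneg (f' := f') (convex_Ici 0)
    (fun t ht => (hf t ht).continuousAt.continuousWithinAt) (fun t ht => ?_) (fun t ht => ?_)
  · rw [interior_Ici] at ht
    exact (hf t (le_of_lt ht)).hasDerivWithinAt
  · rw [interior_Ici] at ht
    exact hf' t (le_of_lt ht)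

theorem antitoneOn_Ici_of_hasDerivAt {f f' : ℝ → ℝ}
    (hf : ∀ t, 0 ≤ t → HasDerivAt f (f' t) t) (hf' : ∀ t, 0 ≤ t → f' t ≤ 0) :
    AntitoneOn f (Ici 0) := fun _ hs _ ht hst =>
  neg_le_neg_iff.1 <| monotoneOn_Ici_of_hasDerivAt (fun t ht => (hf t ht).fun_neg)
    (fun t ht => neg_nonneg.2 (hf' t ht)) hs ht hst

theorem eq_of_hasDerivAt_zero {f : ℝ → ℝ} (hf : ∀ t, 0 ≤ t → HasDerivAt f 0 t)
    {t : ℝ} (ht : 0 ≤ t) : f t = f 0 :=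
  le_antisymm (antitoneOn_Ici_of_hasDerivAt hf (fun _ _ => le_rfl) self_mem_Ici ht ht)
    (monotoneOn_Ici_of_hasDerivAt hf (fun _ _ => le_rfl) self_mem_Ici ht ht)

/-- `f · exp (-∫₀ᵗ c)` is constant. -/
theorem pos_of_hasDerivAt_eq_mul {f c : ℝ → ℝ}
    (hf : ∀ t, 0 ≤ t → HasDerivAt f (c t * f t) t) (hc : ContinuousOn c (Ici 0))
    (h0 : 0 < f 0) {t : ℝ} (ht : 0 ≤ t) : 0 < f t := by
  -- `c` only matters on `[0, ∞)`; extending it by `c 0` makes it continuous on `ℝ`.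
  set c₀ : ℝ → ℝ := fun s => c (max s 0)
  have hc₀ : Continuous c₀ :=
    hc.comp_continuous (continuous_id.max continuous_const) fun s => le_max_right s 0
  set I : ℝ → ℝ := fun s => ∫ σ in (0 : ℝ)..s, c₀ σ
  have hconst : ∀ s, 0 ≤ s → HasDerivAt (fun s => f s * Real.exp (-I s)) 0 s := by
    intro s hs
    have hI : HasDerivAt I (c s) s := by
      simpa [c₀, max_eq_left hs] using (hc₀.integral_hasStrictDerivAt 0 s).hasDerivAt
    exact ((hf s hs).fun_mul hI.neg.exp).congr_deriv (by ring)
  have key := eq_of_hasDerivAt_zero hconst ht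
  simp only [I, intervalIntegral.integral_same, neg_zero, Real.exp_zero, mul_one] at key
  exact pos_of_mul_pos_left (key ▸ h0) (Real.exp_pos _).le

/-- `g - (C / a) V` is nondecreasing, so a lower bound on `V` keeps `g`, and with it `w`, bounded
below; then `V` decreases linearly. -/
theorem exists_lt_of_descent {V V' g g' w : ℝ → ℝ} {a C : ℝ} (ha : 0 < a) (hC : 0 ≤ C)
    (hV : ∀ t, 0 ≤ t → HasDerivAt V (V' t) t) (hV' : ∀ t, 0 ≤ t → V' t ≤ -(a * w t))
    (hg : ∀ t, 0 ≤ t → HasDerivAt g (g' t) t) (hg' : ∀ t, 0 ≤ t → -(C * w t) ≤ g' t)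
    (hw : ∀ c, ∃ δ > 0, ∀ t, 0 ≤ t → c ≤ g t → δ ≤ w t) (K : ℝ) :
    ∃ t, 0 ≤ t ∧ V t < K := by
  by_contra! hK
  have hmono := monotoneOn_Ici_of_hasDerivAt
    (fun t ht => (hg t ht).fun_sub ((hV t ht).const_mul (C / a))) fun t ht => by
      have : C / a * V' t ≤ -(C * w t) :=
        calc C / a * V' t ≤ C / a * -(a * w t) :=
              mul_le_mul_of_nonneg_left (hV' t ht) (by positivity)
          _ = -(C * w t) := by field_simp
      linarith [hg' t ht]
  obtain ⟨δ, hδ, hδw⟩ := hw (g 0 - C / a * V 0 + C / a * K)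
  have hw' : ∀ t, 0 ≤ t → δ ≤ w t := fun t ht => hδw t ht <| by
    have hgt : g 0 - C / a * V 0 ≤ g t - C / a * V t := hmono self_mem_Ici ht ht
    nlinarith [mul_le_mul_of_nonneg_left (hK t ht) (div_nonneg hC ha.le)]
  have hlin := antitoneOn_Ici_of_hasDerivAt
    (fun t ht => (hV t ht).fun_add ((hasDerivAt_id t).const_mul (a * δ)))
    fun t ht => by nlinarith [hV' t ht, hw' t ht]
  set T := (V 0 - K + 1) / (a * δ)
  have hT : 0 ≤ T := div_nonneg (by linarith [hK 0 le_rfl]) (by positivity)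
  have hVT : V T + a * δ * T ≤ V 0 + a * δ * 0 := hlin self_mem_Ici hT hT
  have hT' : a * δ * T = V 0 - K + 1 := mul_div_cancel₀ _ (by positivity)
  linarith [hK T hT]

def invPowPrimitive (k : ℕ) (x : ℝ) : ℝ := if k = 0 then Real.log x else -(x ^ k)⁻¹ / k

theorem invPowPrimitive_zero : invPowPrimitive 0 = Real.log := by
  funext x
  simp [invPowPrimitive]

theorem invPowPrimitive_of_ne_zero {k : ℕ} (hk : k ≠ 0) :
    invPowPrimitive k = fun x : ℝ => -(x ^ k)⁻¹ / (k : ℝ) := by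
  funext x
  simp [invPowPrimitive, hk]

theorem hasDerivAt_invPowPrimitive (k : ℕ) {x : ℝ} (hx : 0 < x) :
    HasDerivAt (invPowPrimitive k) (x ^ (k + 1))⁻¹ x := by
  rcases Nat.eq_zero_or_pos k with rfl | hk
  · simpa [invPowPrimitive_zero] using Real.hasDerivAt_log hx.ne'
  · rw [invPowPrimitive_of_ne_zero hk.ne']
    refine (((hasDerivAt_pow k x).inv (pow_ne_zero k hx.ne')).neg.div_const (k : ℝ)).congr_deriv ?_
    obtain ⟨j, rfl⟩ : ∃ j, k = j + 1 := ⟨k - 1, by omega⟩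
    simp only [Nat.add_sub_cancel]
    field_simp
    ring

theorem invPowPrimitive_le_self (k : ℕ) {x : ℝ} (hx : 0 < x) : invPowPrimitive k x ≤ x := by
  rcases eq_or_ne k 0 with rfl | hk
  · rw [invPowPrimitive_zero]
    linarith [Real.log_le_sub_one_of_pos hx]
  · simp only [invPowPrimitive_of_ne_zero hk, neg_div]
    linarith [show 0 ≤ (x ^ k)⁻¹ / k by positivity]

theorem tendsto_invPowPrimitive_nhdsGT_zero (k : ℕ) :
    Tendsto (invPowPrimitive k) (𝓝[>] 0) atBot := by
  rcases eq_or_ne k 0 with rfl | hk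
  · simpa [invPowPrimitive_zero] using Real.tendsto_log_nhdsGT_zero
  · simp only [invPowPrimitive_of_ne_zero hk, ← inv_pow]
    exact (tendsto_neg_atTop_atBot.comp ((tendsto_pow_atTop hk).comp
      tendsto_inv_nhdsGT_zero)).atBot_div_const (by positivity)

theorem exists_pos_le_of_le_invPowPrimitive (k : ℕ) (c : ℝ) :
    ∃ δ > 0, ∀ x, 0 < x → c ≤ invPowPrimitive k x → δ ≤ x := by
  obtain ⟨δ, hδ, hsub⟩ := mem_nhdsGT_iff_exists_Ioo_subset.1
    ((tendsto_invPowPrimitive_nhdsGT_zero k).eventually (eventually_lt_atBot c))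
  refine ⟨δ, hδ, fun x hx hc => not_lt.1 fun hxδ => ?_⟩
  exact (hsub ⟨hx, hxδ⟩ : invPowPrimitive k x < c).not_ge hc

open Matrix

section Loss

variable (A : Matrix (Fin M) (Fin N) ℝ) (b : Fin M → ℝ) (L : ℕ)

def lossResidual (x : Fin N → ℝ) : Fin M → ℝ := A *ᵥ hadPow x L - b

theorem loss_nonneg (x : Fin N → ℝ) : 0 ≤ loss A b L x := by
  unfold loss
  positivity

theorem gradLoss_eq (x : Fin N → ℝ) (n : Fin N) :
    gradLoss A b L x n = (Aᵀ *ᵥ lossResidual A b L x) n * x n ^ (L - 1) := rfl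

theorem sum_lossResidual_sq (hL : L ≠ 0) (x : Fin N → ℝ) :
    ∑ m, lossResidual A b L x m ^ 2 = 2 * L * loss A b L x := by
  rw [loss, ← mul_assoc, mul_one_div_cancel (by positivity), one_mul]
  rfl

theorem sum_transpose_mulVec_lossResidual_mul {z : Fin N → ℝ} (hz : A *ᵥ z = b)
    (x : Fin N → ℝ) :
    ∑ n, (Aᵀ *ᵥ lossResidual A b L x) n * (x n ^ L - z n) = ∑ m, lossResidual A b L x m ^ 2 := by
  change (Aᵀ *ᵥ lossResidual A b L x) ⬝ᵥ (hadPow x L - z) = _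
  rw [mulVec_transpose, ← dotProduct_mulVec, mulVec_sub, hz]
  simp only [dotProduct, lossResidual, sq]

theorem hasDerivAt_loss_comp (hL : L ≠ 0) {x : ℝ → Fin N → ℝ} {x' : Fin N → ℝ} {t : ℝ}
    (hx : ∀ n, HasDerivAt (fun s => x s n) (x' n) t) :
    HasDerivAt (fun s => loss A b L (x s)) (∑ n, gradLoss A b L (x t) n * x' n) t := by
  have hres : ∀ m, HasDerivAt (fun s => lossResidual A b L (x s) m)
      (∑ n, A m n * (L * x t n ^ (L - 1) * x' n)) t := fun m =>
    (HasDerivAt.fun_sum fun n (_ : n ∈ Finset.univ) =>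
      ((hx n).fun_pow L).const_mul (A m n)).sub_const (b m)
  refine ((HasDerivAt.fun_sum fun m _ => (hres m).fun_pow 2).const_mul
    (1 / (2 * (L : ℝ)))).congr_deriv ?_
  simp only [gradLoss_eq, mulVec, dotProduct, transpose_apply, Finset.mul_sum, Finset.sum_mul]
  rw [Finset.sum_comm]
  refine Finset.sum_congr rfl fun n _ => Finset.sum_congr rfl fun m _ => ?_
  field_simp
  ring

theorem transpose_mulVec_apply_le (y : Fin M → ℝ) (n : Fin N) :
    (Aᵀ *ᵥ y) n ≤ (∑ m, |A m n|) * √(∑ m, y m ^ 2) := by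
  change ∑ m, A m n * y m ≤ _
  rw [Finset.sum_mul]
  refine Finset.sum_le_sum fun m _ => ?_
  calc A m n * y m ≤ |A m n| * |y m| := by rw [← abs_mul]; exact le_abs_self _
    _ ≤ |A m n| * √(∑ m, y m ^ 2) := mul_le_mul_of_nonneg_left
        (Real.abs_le_sqrt (Finset.single_le_sum (fun i _ => sq_nonneg (y i)) (Finset.mem_univ m)))
        (abs_nonneg _)

theorem continuous_transpose_mulVec_lossResidual (n : Fin N) :
    Continuous fun x => (Aᵀ *ᵥ lossResidual A b L x) n := by
  unfold lossResidual hadPow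
  fun_prop

end Loss

/-- Up to the constant `breF L z`, `lyapunov L z x` is the Bregman divergence
`bregman L z (hadPow x L)` for `x > 0`. -/
def lyapunov (L : ℕ) (z x : Fin N → ℝ) : ℝ :=
  ∑ n, (x n ^ 2 / 2 - z n * invPowPrimitive (L - 2) (x n))

theorem neg_sum_sq_le_lyapunov (L : ℕ) {z x : Fin N → ℝ} (hz : ∀ n, 0 ≤ z n)
    (hx : ∀ n, 0 < x n) : -∑ n, z n ^ 2 / 2 ≤ lyapunov L z x := by
  rw [lyapunov, ← Finset.sum_neg_distrib]
  refine Finset.sum_le_sum fun n _ => ?_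
  nlinarith [mul_le_mul_of_nonneg_left (invPowPrimitive_le_self (L - 2) (hx n)) (hz n),
    sq_nonneg (x n - z n)]

def ScaledGradFlow (A : Matrix (Fin M) (Fin N) ℝ) (b : Fin M → ℝ) (L : ℕ) (w : ℝ → ℝ)
    (x : ℝ → Fin N → ℝ) : Prop :=
  ∀ t, 0 ≤ t → ∀ n, HasDerivAt (fun s => x s n) (-(w t * gradLoss A b L (x t) n)) t

namespace ScaledGradFlow

variable {A : Matrix (Fin M) (Fin N) ℝ} {b : Fin M → ℝ} {L : ℕ} {w : ℝ → ℝ}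
  {x : ℝ → Fin N → ℝ} {z : Fin N → ℝ} {t : ℝ}

theorem hasDerivAt_loss (h : ScaledGradFlow A b L w x) (hL : L ≠ 0) (ht : 0 ≤ t) :
    HasDerivAt (fun s => loss A b L (x s)) (-(w t * ∑ n, gradLoss A b L (x t) n ^ 2)) t :=
  (hasDerivAt_loss_comp A b L hL (h t ht)).congr_deriv <| by
    rw [Finset.mul_sum, ← Finset.sum_neg_distrib]
    exact Finset.sum_congr rfl fun n _ => by ring

theorem antitoneOn_loss (h : ScaledGradFlow A b L w x) (hL : L ≠ 0)
    (hw : ∀ t, 0 ≤ t → 0 ≤ w t) :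
    AntitoneOn (fun t => loss A b L (x t)) (Ici 0) :=
  antitoneOn_Ici_of_hasDerivAt (fun _ ht => h.hasDerivAt_loss hL ht) fun t ht =>
    neg_nonpos.2 (mul_nonneg (hw t ht) (Finset.sum_nonneg fun _ _ => sq_nonneg _))

theorem apply_pos (h : ScaledGradFlow A b L w x) (hL : 2 ≤ L) (hw : ContinuousOn w (Ici 0))
    (h0 : ∀ n, 0 < x 0 n) (ht : 0 ≤ t) (n : Fin N) : 0 < x t n := by
  refine pos_of_hasDerivAt_eq_mul (c := fun s => -(w s * (Aᵀ *ᵥ lossResidual A b L (x s)) n *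
    x s n ^ (L - 2))) (fun s hs => (h s hs n).congr_deriv ?_) (fun s hs => ?_) (h0 n) ht
  · rw [gradLoss_eq, show L - 1 = L - 2 + 1 by omega, pow_succ]
    ring
  · have hx : ContinuousAt x s := continuousAt_pi.2 fun k => (h s hs k).continuousAt
    exact (((hw s hs).mul ((continuous_transpose_mulVec_lossResidual A b L n).continuousAt.comp
      hx).continuousWithinAt).mul ((h s hs n).continuousAt.pow _).continuousWithinAt).neg

theorem hasDerivAt_invPowPrimitive (h : ScaledGradFlow A b L w x) (hL : 2 ≤ L) (ht : 0 ≤ t)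
    {n : Fin N} (hx : 0 < x t n) :
    HasDerivAt (fun s => invPowPrimitive (L - 2) (x s n))
      (-(w t * (Aᵀ *ᵥ lossResidual A b L (x t)) n)) t := by
  refine ((_root_.hasDerivAt_invPowPrimitive (L - 2) hx).comp t (h t ht n)).congr_deriv ?_
  rw [gradLoss_eq, show L - 2 + 1 = L - 1 by omega]
  field_simp

theorem hasDerivAt_lyapunov (h : ScaledGradFlow A b L w x) (hL : 2 ≤ L)
    (hz : A *ᵥ z = b) (ht : 0 ≤ t) (hx : ∀ n, 0 < x t n) :
    HasDerivAt (fun s => lyapunov L z (x s)) (-(2 * L * w t * loss A b L (x t))) t := by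
  refine (HasDerivAt.fun_sum fun n (_ : n ∈ Finset.univ) =>
    (((h t ht n).fun_pow 2).div_const 2).fun_sub
      ((h.hasDerivAt_invPowPrimitive hL ht (hx n)).const_mul (z n))).congr_deriv ?_
  rw [show 2 * (L : ℝ) * w t * loss A b L (x t) = w t * (2 * L * loss A b L (x t)) by ring,
    ← sum_lossResidual_sq A b L (by omega), ← sum_transpose_mulVec_lossResidual_mul A b L hz,
    Finset.mul_sum, ← Finset.sum_neg_distrib]
  refine Finset.sum_congr rfl fun n _ => ?_
  have hxL : x t n ^ L = x t n * x t n ^ (L - 1) := by rw [← pow_succ']; congr 1; omega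
  rw [gradLoss_eq, hxL]
  ring

theorem exists_loss_lt [Nonempty (Fin N)] (h : ScaledGradFlow A b L w x) (hL : 2 ≤ L)
    (hz : z ∈ Splus A b) (hw : ContinuousOn w (Ici 0)) (hxw : ∀ t, 0 ≤ t → ∀ n, x t n ^ 2 ≤ w t)
    (h0 : ∀ n, 0 < x 0 n) {ε : ℝ} (hε : 0 < ε) : ∃ t, 0 ≤ t ∧ loss A b L (x t) < ε := by
  by_contra! hε'
  obtain ⟨n₀⟩ := ‹Nonempty (Fin N)›
  have hw0 : ∀ t, 0 ≤ t → 0 ≤ w t := fun t ht => (sq_nonneg _).trans (hxw t ht n₀)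
  have hL0 : (0 : ℝ) ≤ 2 * L := by positivity
  have hpos : ∀ t, 0 ≤ t → ∀ n, 0 < x t n := fun t ht => h.apply_pos hL hw h0 ht
  obtain ⟨C, hC0, hC⟩ : ∃ C, 0 ≤ C ∧ ∀ t, 0 ≤ t → (Aᵀ *ᵥ lossResidual A b L (x t)) n₀ ≤ C := by
    refine ⟨(∑ m, |A m n₀|) * √(2 * L * loss A b L (x 0)), by positivity, fun t ht => ?_⟩
    refine (transpose_mulVec_apply_le A _ n₀).trans ?_
    rw [sum_lossResidual_sq A b L (by omega)]
    gcongr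
    exact h.antitoneOn_loss (by omega) hw0 self_mem_Ici ht ht
  have hδ (c : ℝ) : ∃ δ > 0, ∀ t, 0 ≤ t → c ≤ invPowPrimitive (L - 2) (x t n₀) → δ ≤ w t := by
    obtain ⟨δ, hδ, hδx⟩ := exists_pos_le_of_le_invPowPrimitive (L - 2) c
    exact ⟨δ ^ 2, by positivity, fun t ht hc =>
      (pow_le_pow_left₀ hδ.le (hδx _ (hpos t ht n₀) hc) 2).trans (hxw t ht n₀)⟩
  obtain ⟨t, ht, hlt⟩ := exists_lt_of_descent (a := 2 * L * ε) (by positivity) hC0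
    (fun t ht => h.hasDerivAt_lyapunov hL hz.2 ht (hpos t ht))
    (fun t ht => by
      nlinarith [mul_le_mul_of_nonneg_left (hε' t ht) (mul_nonneg hL0 (hw0 t ht))])
    (fun t ht => h.hasDerivAt_invPowPrimitive hL ht (hpos t ht n₀))
    (fun t ht => by nlinarith [mul_le_mul_of_nonneg_left (hC t ht) (hw0 t ht)]) hδ
    (-∑ n, z n ^ 2 / 2)
  exact hlt.not_ge (neg_sum_sq_le_lyapunov L hz.1 (hpos t ht))

theorem tendsto_loss [Nonempty (Fin N)] (h : ScaledGradFlow A b L w x) (hL : 2 ≤ L)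
    (hz : z ∈ Splus A b) (hw : ContinuousOn w (Ici 0)) (hxw : ∀ t, 0 ≤ t → ∀ n, x t n ^ 2 ≤ w t)
    (h0 : ∀ n, 0 < x 0 n) : Tendsto (fun t => loss A b L (x t)) atTop (𝓝 0) := by
  obtain ⟨n₀⟩ := ‹Nonempty (Fin N)›
  have hanti := h.antitoneOn_loss (by omega) fun t ht => (sq_nonneg _).trans (hxw t ht n₀)
  refine tendsto_order.2 ⟨fun a ha => .of_forall fun t => ha.trans_le (loss_nonneg A b L _),
    fun ε hε => ?_⟩
  obtain ⟨t₀, ht₀, hlt⟩ := h.exists_loss_lt hL hz hw hxw h0 hε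
  filter_upwards [eventually_ge_atTop t₀] with t ht
  exact (hanti ht₀ (ht₀.trans ht) ht).trans_lt hlt

end ScaledGradFlow

theorem sum_mul_gradU (A : Matrix (Fin M) (Fin N) ℝ) (b : Fin M → ℝ) (L : ℕ) (r : ℝ)
    (u : Fin N → ℝ) : ∑ n, u n * gradU A b L r u n = 0 := by
  rcases eq_or_ne (eucNorm u) 0 with hu | hu
  · simp [gradU, hu]
  · have hsq : eucNorm u ^ 2 = ∑ n, u n ^ 2 :=
      Real.sq_sqrt (Finset.sum_nonneg fun n _ => sq_nonneg _)
    simp only [gradU, mul_sub, mul_left_comm (u _), Finset.sum_sub_distrib, ← Finset.mul_sum]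
    field_simp
    rw [hsq, sub_self, mul_zero, mul_zero]

theorem normVec_of_eucNorm_eq_one {u : Fin N → ℝ} (hu : eucNorm u = 1) (r : ℝ) :
    normVec r u = r • u := by
  rw [normVec, hu, div_one]

theorem sq_smul_apply_le_of_eucNorm_eq_one {u : Fin N → ℝ} (hu : eucNorm u = 1) (c : ℝ)
    (n : Fin N) : (c • u) n ^ 2 ≤ c ^ 2 := by
  have hsum : ∑ n, u n ^ 2 = 1 := (Real.sqrt_eq_one).1 hu
  rw [Pi.smul_apply, smul_eq_mul, mul_pow]
  exact mul_le_of_le_one_right (sq_nonneg c)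
    (hsum ▸ Finset.single_le_sum (fun i _ => sq_nonneg (u i)) (Finset.mem_univ n))

namespace WNFlow

variable {A : Matrix (Fin M) (Fin N) ℝ} {b : Fin M → ℝ} {L : ℕ} {ηr ηu r : ℝ → ℝ}
  {u : ℝ → Fin N → ℝ} {t : ℝ}

theorem eucNorm_eq_one (h : WNFlow A b L ηr ηu r u) (h0 : eucNorm (u 0) = 1) (ht : 0 ≤ t) :
    eucNorm (u t) = 1 := by
  have hconst : ∀ t, 0 ≤ t → HasDerivAt (fun s => ∑ n, u s n ^ 2) 0 t := fun t ht =>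
    (HasDerivAt.fun_sum fun n (_ : n ∈ Finset.univ) => (h.2 t ht n).fun_pow 2).congr_deriv <| by
      calc _ = -(2 * ηu t) * ∑ n, u t n * gradU A b L (r t) (u t) n := by
            rw [Finset.mul_sum]
            exact Finset.sum_congr rfl fun n _ => by ring
        _ = 0 := by rw [sum_mul_gradU, mul_zero]
  rw [eucNorm, eq_of_hasDerivAt_zero hconst ht]
  exact h0

theorem scaledGradFlow (h : WNFlow A b L (fun t => r t ^ 2) (fun _ => 1) r u)
    (hu : ∀ t, 0 ≤ t → eucNorm (u t) = 1) :
    ScaledGradFlow A b L (fun t => r t ^ 2) (fun t => r t • u t) := fun t ht n =>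
  ((h.1 t ht).fun_mul (h.2 t ht n)).congr_deriv <| by
    simp only [gradR, gradU, normVec_of_eucNorm_eq_one (hu t ht), hu t ht, div_one, one_pow]
    ring

end WNFlow

theorem stmt19 {M N : ℕ} (L : ℕ) (hL : 2 ≤ L)
    (A : Matrix (Fin M) (Fin N) ℝ) (b : Fin M → ℝ) (hb : b ≠ 0)
    (hS : (Splus A b).Nonempty)
    (r : ℝ → ℝ) (u : ℝ → Fin N → ℝ)
    (hflow : WNFlow A b L (fun t => r t ^ 2) (fun _ => 1) r u)
    (hr0 : 0 < r 0) (hu0 : ∀ n, 0 < u 0 n) (hnorm : eucNorm (u 0) = 1) :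
    Tendsto (fun t => loss A b L (normVec (r t) (u t))) atTop (𝓝 0) := by
  obtain ⟨z, hz⟩ := hS
  have : Nonempty (Fin N) := not_isEmpty_iff.1 fun _ => hb <| by
    rw [← hz.2]
    ext m
    simp [mulVec, dotProduct]
  have hunit : ∀ t, 0 ≤ t → eucNorm (u t) = 1 := fun t ht => hflow.eucNorm_eq_one hnorm ht
  have hconv := (hflow.scaledGradFlow hunit).tendsto_loss hL hz
    (fun t ht => ((hflow.1 t ht).continuousAt.pow 2).continuousWithinAt)
    (fun t ht => sq_smul_apply_le_of_eucNorm_eq_one (hunit t ht) (r t))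
    (fun n => mul_pos hr0 (hu0 n))
  refine hconv.congr' ?_
  filter_upwards [eventually_ge_atTop 0] with t ht
  rw [normVec_of_eucNorm_eq_one (hunit t ht)]

end
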